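/- arXiv:0710.5827 — 2 statements merged into one kernel-verified Lean document; each statement's English description precedes it below -/
import Mathlib

section
/- The composition of an ε-non-entangling map with a δ-non-entangling map is an (ε + δ + εδ)-non-entangling map. -/
/-!
If `τ = (Λσ + sπ)/(1+s)` is separable, then `Ωτ = (ΩΛσ + s Ωπ)/(1+s)`, and any `s'`, `π'` with
`(Ωτ + s'π')/(1+s')` separable give `(ΩΛσ + t π'')/(1+t)` separable with `1 + t = (1+s)(1+s')`
and `π''` a convex combination of `Ωπ` and `π'`. So `1 + RG` is submultiplicative along the two
steps, and taking infima over `s'` and then `s` gives `RG (ΩΛσ) ≤ ε + (1+ε) δ`. The infima are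
over nonempty sets (`sInf ∅ = 0` would break this) because every state `ρ ≤ 1` can be mixed
into the maximally mixed state.
-/

open Matrix Kronecker ComplexOrder

noncomputable section

def IsState {n : Type*} [Fintype n] (ρ : Matrix n n ℂ) : Prop :=
  ρ.PosSemidef ∧ ρ.trace = 1

def SepState {α β : Type*} [Fintype α] [Fintype β]
    (σ : Matrix (α × β) (α × β) ℂ) : Prop :=
  ∃ (k : ℕ) (p : Fin k → ℝ) (A : Fin k → Matrix α α ℂ) (B : Fin k → Matrix β β ℂ),
    (∀ i, 0 ≤ p i) ∧ (∑ i, p i = 1) ∧ (∀ i, IsState (A i)) ∧ (∀ i, IsState (B i)) ∧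
    σ = ∑ i, (p i : ℂ) • (A i ⊗ₖ B i)

/-- Global robustness of entanglement. -/
def RG {α β : Type*} [Fintype α] [Fintype β] (ρ : Matrix (α × β) (α × β) ℂ) : ℝ :=
  sInf {s : ℝ | 0 ≤ s ∧ ∃ π : Matrix (α × β) (α × β) ℂ, IsState π ∧
    SepState ((((1 + s)⁻¹ : ℝ) : ℂ) • (ρ + (s : ℂ) • π))}

/-- Log-global robustness (log base 2). -/
def LRG {α β : Type*} [Fintype α] [Fintype β] (ρ : Matrix (α × β) (α × β) ℂ) : ℝ :=
  Real.logb 2 (1 + RG ρ)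

/-- Matrix logarithm (base 2) of a Hermitian matrix, via the spectral decomposition. -/
def matLog {n : Type*} [Fintype n] [DecidableEq n] (A : Matrix n n ℂ) : Matrix n n ℂ :=
  if hA : A.IsHermitian then
    (hA.eigenvectorUnitary : Matrix n n ℂ) *
      Matrix.diagonal (fun i => (Real.logb 2 (hA.eigenvalues i) : ℂ)) *
      (star hA.eigenvectorUnitary : Matrix n n ℂ)
  else 0

/-- Quantum relative entropy S(ρ‖σ) = tr ρ (log ρ − log σ). -/
def relEnt {n : Type*} [Fintype n] [DecidableEq n] (ρ σ : Matrix n n ℂ) : ℝ :=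
  ((ρ * (matLog ρ - matLog σ)).trace).re

/-- Relative entropy of entanglement. -/
def ER {α β : Type*} [Fintype α] [Fintype β] [DecidableEq α] [DecidableEq β]
    (ρ : Matrix (α × β) (α × β) ℂ) : ℝ :=
  sInf {x : ℝ | ∃ σ, IsState σ ∧ SepState σ ∧ x = relEnt ρ σ}

/-- CPTP maps, presented by Kraus operators. -/
def IsCPTP {n m : Type*} [Fintype n] [DecidableEq n] [Fintype m] [DecidableEq m]
    (Λ : Matrix n n ℂ →ₗ[ℂ] Matrix m m ℂ) : Prop :=
  ∃ (k : ℕ) (K : Fin k → Matrix m n ℂ),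
    (∀ X, Λ X = ∑ i, K i * X * (K i)ᴴ) ∧ (∑ i, (K i)ᴴ * K i = 1)

/-- Maximally entangled state on α ⊗ α. -/
def maxEnt (α : Type*) [Fintype α] [DecidableEq α] : Matrix (α × α) (α × α) ℂ :=
  Matrix.of fun p q => if p.1 = p.2 ∧ q.1 = q.2 then ((Fintype.card α : ℂ))⁻¹ else 0

/-- Trace of the positive part of a Hermitian matrix. -/
def trPos {n : Type*} [Fintype n] [DecidableEq n] (A : Matrix n n ℂ) : ℝ :=
  if hA : A.IsHermitian then ∑ i, max (hA.eigenvalues i) 0 else 0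

/-- Trace norm. -/
def traceNorm {n : Type*} [Fintype n] [DecidableEq n] (A : Matrix n n ℂ) : ℝ :=
  ∑ i, Real.sqrt ((Matrix.posSemidef_conjTranspose_mul_self A).1.eigenvalues i)

open scoped MatrixOrder

section Kraus

variable {n m p : Type*} [Fintype n] [DecidableEq n] [Fintype m] [DecidableEq m]
  [Fintype p] [DecidableEq p]

lemma isCPTP_of_kraus {ι : Type*} [Fintype ι] {Λ : Matrix n n ℂ →ₗ[ℂ] Matrix m m ℂ}
    (K : ι → Matrix m n ℂ) (hΛ : ∀ X, Λ X = ∑ i, K i * X * (K i)ᴴ)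
    (hK : ∑ i, (K i)ᴴ * K i = 1) : IsCPTP Λ := by
  let e := Fintype.equivFin ι
  refine ⟨Fintype.card ι, K ∘ e.symm, fun X => ?_, ?_⟩
  · rw [hΛ, ← e.symm.sum_comp]
    rfl
  · rw [← hK, ← e.symm.sum_comp]
    rfl

lemma IsCPTP.comp {Λ : Matrix n n ℂ →ₗ[ℂ] Matrix m m ℂ} {Ω : Matrix m m ℂ →ₗ[ℂ] Matrix p p ℂ}
    (hΩ : IsCPTP Ω) (hΛ : IsCPTP Λ) : IsCPTP (Ω ∘ₗ Λ) := by
  obtain ⟨k, K, hΛK, hK⟩ := hΛ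
  obtain ⟨l, L, hΩL, hL⟩ := hΩ
  refine isCPTP_of_kraus (fun ij : Fin k × Fin l => L ij.2 * K ij.1) (fun X => ?_) ?_
  · simp only [LinearMap.comp_apply, hΛK, hΩL, Fintype.sum_prod_type, Matrix.mul_sum,
      Matrix.sum_mul, Matrix.conjTranspose_mul, Matrix.mul_assoc]
    exact Finset.sum_comm
  · calc ∑ ij : Fin k × Fin l, (L ij.2 * K ij.1)ᴴ * (L ij.2 * K ij.1)
        = ∑ i, (K i)ᴴ * (∑ j, (L j)ᴴ * L j) * K i := by
          simp only [Fintype.sum_prod_type, Matrix.conjTranspose_mul, Matrix.mul_sum,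
            Matrix.sum_mul, Matrix.mul_assoc]
      _ = 1 := by simp only [hL, Matrix.mul_one, hK]

lemma IsCPTP.isState_apply {Λ : Matrix n n ℂ →ₗ[ℂ] Matrix m m ℂ} (hΛ : IsCPTP Λ)
    {ρ : Matrix n n ℂ} (hρ : IsState ρ) : IsState (Λ ρ) := by
  obtain ⟨k, K, hΛK, hK⟩ := hΛ
  rw [hΛK]
  refine ⟨Matrix.posSemidef_sum _ fun i _ => hρ.1.mul_mul_conjTranspose_same (K i), ?_⟩
  simp_rw [Matrix.trace_sum, Matrix.trace_mul_cycle (K _) ρ, ← Matrix.trace_sum,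
    ← Finset.sum_mul, hK, one_mul, hρ.2]

end Kraus

section States

variable {n : Type*} [Fintype n]

lemma isState_smul_add_smul {ρ π : Matrix n n ℂ} (hρ : IsState ρ) (hπ : IsState π)
    {a b : ℝ} (ha : 0 ≤ a) (hb : 0 ≤ b) (hab : a + b = 1) :
    IsState ((a : ℂ) • ρ + (b : ℂ) • π) := by
  refine ⟨(hρ.1.smul (by exact_mod_cast ha)).add (hπ.1.smul (by exact_mod_cast hb)), ?_⟩
  rw [Matrix.trace_add, Matrix.trace_smul, Matrix.trace_smul, hρ.2, hπ.2, smul_eq_mul,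
    smul_eq_mul, mul_one, mul_one]
  exact_mod_cast hab

lemma IsState.posSemidef_one_sub [DecidableEq n] {ρ : Matrix n n ℂ} (hρ : IsState ρ) :
    (1 - ρ).PosSemidef := by
  obtain ⟨hpsd, htr⟩ := hρ
  have hsum : ∑ j, hpsd.1.eigenvalues j = 1 := by
    have := hpsd.1.trace_eq_sum_eigenvalues
    rw [htr] at this
    simpa using (congrArg Complex.re this).symm
  rw [← Matrix.le_iff]
  refine CFC.le_one (R := ℝ) (fun x hx => ?_) hpsd.1
  obtain ⟨i, rfl⟩ := hpsd.1.spectrum_real_eq_range_eigenvalues ▸ hx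
  exact hsum ▸ Finset.single_le_sum (fun j _ => hpsd.eigenvalues_nonneg j) (Finset.mem_univ i)

def maxMixed (n : Type*) [Fintype n] [DecidableEq n] : Matrix n n ℂ :=
  ((Fintype.card n : ℂ)⁻¹) • 1

lemma isState_maxMixed [DecidableEq n] [Nonempty n] : IsState (maxMixed n) := by
  refine ⟨Matrix.PosSemidef.one.smul (by positivity), ?_⟩
  rw [maxMixed, Matrix.trace_smul, Matrix.trace_one, smul_eq_mul]
  exact inv_mul_cancel₀ (by exact_mod_cast Fintype.card_ne_zero)

lemma maxMixed_prod {α β : Type*} [Fintype α] [DecidableEq α] [Fintype β] [DecidableEq β] :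
    maxMixed (α × β) = maxMixed α ⊗ₖ maxMixed β := by
  rw [maxMixed, maxMixed, maxMixed, Matrix.smul_kronecker, Matrix.kronecker_smul,
    Matrix.one_kronecker_one, smul_smul, Fintype.card_prod, Nat.cast_mul, mul_inv, mul_comm]

end States

section Separable

variable {α β : Type*} [Fintype α] [Fintype β]

lemma SepState.isState {σ : Matrix (α × β) (α × β) ℂ} (hσ : SepState σ) : IsState σ := by
  obtain ⟨k, p, A, B, hp, hp1, hA, hB, rfl⟩ := hσ
  refine ⟨Matrix.posSemidef_sum _ fun i _ =>
    ((hA i).1.kronecker (hB i).1).smul (by exact_mod_cast hp i), ?_⟩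
  simp only [Matrix.trace_sum, Matrix.trace_smul, Matrix.trace_kronecker, (hA _).2, (hB _).2,
    mul_one, smul_eq_mul]
  exact_mod_cast hp1

lemma sepState_kronecker {A : Matrix α α ℂ} {B : Matrix β β ℂ} (hA : IsState A)
    (hB : IsState B) : SepState (A ⊗ₖ B) :=
  ⟨1, fun _ => 1, fun _ => A, fun _ => B, fun _ => zero_le_one, by simp, fun _ => hA,
    fun _ => hB, by simp⟩

end Separable

def mixture {M : Type*} [AddCommGroup M] [Module ℂ M] (s : ℝ) (ρ π : M) : M :=
  (((1 + s)⁻¹ : ℝ) : ℂ) • (ρ + (s : ℂ) • π)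

section Mixture

variable {M N : Type*} [AddCommGroup M] [Module ℂ M] [AddCommGroup N] [Module ℂ N]

lemma map_mixture (Φ : M →ₗ[ℂ] N) (s : ℝ) (ρ π : M) :
    Φ (mixture s ρ π) = mixture s (Φ ρ) (Φ π) := by
  simp only [mixture, map_smul, map_add]

lemma mixture_mixture {s s' : ℝ} (hs : 1 + s ≠ 0) (hs' : 1 + s' ≠ 0)
    (ht : s + s' + s * s' ≠ 0) (ρ π π' : M) :
    mixture s' (mixture s ρ π) π' = mixture (s + s' + s * s') ρ
      ((((s + s' + s * s')⁻¹ * s : ℝ) : ℂ) • π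
        + (((s + s' + s * s')⁻¹ * (s' * (1 + s)) : ℝ) : ℂ) • π') := by
  have h1t : 1 + (s + s' + s * s') = (1 + s) * (1 + s') := by ring
  simp only [mixture, h1t]
  set t := s + s' + s * s'
  push_cast
  have hs : (1 : ℂ) + s ≠ 0 := by exact_mod_cast hs
  have hs' : (1 : ℂ) + s' ≠ 0 := by exact_mod_cast hs'
  have ht : (t : ℂ) ≠ 0 := by exact_mod_cast ht
  match_scalars <;> field_simp

end Mixture

section MixtureOfStates

variable {n : Type*} [Fintype n]

lemma isState_mixture {ρ π : Matrix n n ℂ} (hρ : IsState ρ) (hπ : IsState π) {s : ℝ}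
    (hs : 0 ≤ s) : IsState (mixture s ρ π) := by
  have h : mixture s ρ π = (((1 + s)⁻¹ : ℝ) : ℂ) • ρ + (((1 + s)⁻¹ * s : ℝ) : ℂ) • π := by
    rw [mixture, smul_add, smul_smul]
    push_cast
    rfl
  rw [h]
  exact isState_smul_add_smul hρ hπ (by positivity) (by positivity) (by field_simp)

lemma exists_mixture_mixture_eq {s s' : ℝ} (hs : 0 ≤ s) (hs' : 0 ≤ s') (ρ : Matrix n n ℂ)
    {π π' : Matrix n n ℂ} (hπ : IsState π) (hπ' : IsState π') :
    ∃ π'', IsState π'' ∧ mixture s' (mixture s ρ π) π' = mixture (s + s' + s * s') ρ π'' := by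
  rcases (by positivity : 0 ≤ s + s' + s * s').eq_or_lt with ht | ht
  · obtain ⟨rfl, rfl⟩ : s = 0 ∧ s' = 0 := by constructor <;> nlinarith
    exact ⟨π', hπ', by simp [mixture]⟩
  · refine ⟨_, isState_smul_add_smul hπ hπ' (by positivity) (by positivity) ?_,
      mixture_mixture (by positivity) (by positivity) ht.ne' ρ π π'⟩
    field_simp
    ring

end MixtureOfStates

section Robustness

variable {α β : Type*} [Fintype α] [Fintype β]

lemma RG_le {ρ π : Matrix (α × β) (α × β) ℂ} {s : ℝ} (hs : 0 ≤ s) (hπ : IsState π)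
    (hsep : SepState (mixture s ρ π)) : RG ρ ≤ s :=
  csInf_le ⟨0, fun _ h => h.1⟩ ⟨hs, π, hπ, hsep⟩

variable [DecidableEq α] [DecidableEq β]

/-- Since `ρ ≤ 1`, mixing in `π ∝ (1 - ρ) + maxMixed` gives the maximally mixed
state, which is a product state. -/
lemma exists_sepState_mixture {ρ : Matrix (α × β) (α × β) ℂ} (hρ : IsState ρ) :
    ∃ s, 0 ≤ s ∧ ∃ π, IsState π ∧ SepState (mixture s ρ π) := by
  have hne : Nonempty (α × β) := by
    by_contra h
    rw [not_nonempty_iff] at h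
    simpa [Matrix.trace_eq_zero_of_isEmpty] using hρ.2
  have : Nonempty α := ⟨hne.some.1⟩
  have : Nonempty β := ⟨hne.some.2⟩
  set N : ℝ := (Fintype.card (α × β) : ℝ)
  have hN : (N : ℂ) ≠ 0 := by simp [N]
  refine ⟨N, by positivity, (N : ℂ)⁻¹ • (1 - ρ + maxMixed (α × β)), ⟨?_, ?_⟩, ?_⟩
  · exact (hρ.posSemidef_one_sub.add isState_maxMixed.1).smul (by positivity)
  · rw [Matrix.trace_smul, Matrix.trace_add, Matrix.trace_sub, Matrix.trace_one, hρ.2,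
      isState_maxMixed.2, sub_add_cancel, smul_eq_mul]
    exact inv_mul_cancel₀ hN
  · have hmix : mixture N ρ ((N : ℂ)⁻¹ • (1 - ρ + maxMixed (α × β))) = maxMixed (α × β) := by
      rw [mixture, maxMixed, show ((Fintype.card (α × β) : ℕ) : ℂ) = N by simp [N]]
      have hN1 : (1 + N : ℂ) ≠ 0 := by exact_mod_cast (by positivity : 1 + N ≠ 0)
      push_cast
      match_scalars <;> field_simp <;> ring
    rw [hmix, maxMixed_prod]
    exact sepState_kronecker isState_maxMixed isState_maxMixed

lemma le_add_mul_RG {ρ : Matrix (α × β) (α × β) ℂ} (hρ : IsState ρ) {x a b : ℝ} (hb : 0 < b)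
    (h : ∀ s, 0 ≤ s → ∀ π, IsState π → SepState (mixture s ρ π) → x ≤ a + b * s) :
    x ≤ a + b * RG ρ := by
  obtain ⟨s, hs, π, hπ, hsep⟩ := exists_sepState_mixture hρ
  have : (x - a) / b ≤ RG ρ := le_csInf ⟨s, hs, π, hπ, hsep⟩ fun s' ⟨hs', π', hπ', hsep'⟩ => by
    rw [div_le_iff₀ hb]
    linarith [h s' hs' π' hπ' hsep']
  rw [div_le_iff₀ hb] at this
  linarith

lemma RG_le_add_mul_RG_mixture {ρ π : Matrix (α × β) (α × β) ℂ} (hρ : IsState ρ)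
    (hπ : IsState π) {s : ℝ} (hs : 0 ≤ s) : RG ρ ≤ s + (1 + s) * RG (mixture s ρ π) :=
  le_add_mul_RG (isState_mixture hρ hπ hs) (by linarith) fun s' hs' π' hπ' hsep => by
    obtain ⟨π'', hπ'', heq⟩ := exists_mixture_mixture_eq hs hs' ρ hπ hπ'
    have := RG_le (by positivity) hπ'' (heq ▸ hsep)
    linarith

end Robustness

theorem stmt_5_general {α β γ δ' κ μ : Type*}
    [Fintype α] [DecidableEq α] [Fintype β] [DecidableEq β]
    [Fintype γ] [DecidableEq γ] [Fintype δ'] [DecidableEq δ']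
    [Fintype κ] [DecidableEq κ] [Fintype μ] [DecidableEq μ]
    (ε d : ℝ) (hε : 0 ≤ ε)
    (Λ : Matrix (α × β) (α × β) ℂ →ₗ[ℂ] Matrix (γ × δ') (γ × δ') ℂ)
    (Ω : Matrix (γ × δ') (γ × δ') ℂ →ₗ[ℂ] Matrix (κ × μ) (κ × μ) ℂ)
    (hΛ : IsCPTP Λ) (hΩ : IsCPTP Ω)
    (hΛNE : ∀ σ, IsState σ → SepState σ → RG (Λ σ) ≤ d)
    (hΩNE : ∀ σ, IsState σ → SepState σ → RG (Ω σ) ≤ ε) :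
    IsCPTP (Ω ∘ₗ Λ) ∧
    ∀ σ, IsState σ → SepState σ → RG ((Ω ∘ₗ Λ) σ) ≤ ε + d + ε * d := by
  refine ⟨hΩ.comp hΛ, fun σ hσ hσsep => ?_⟩
  have hΛσ := hΛ.isState_apply hσ
  have hwitness : ∀ s, 0 ≤ s → ∀ π, IsState π → SepState (mixture s (Λ σ) π) →
      RG (Ω (Λ σ)) ≤ ε + (1 + ε) * s := by
    intro s hs π hπ hτ
    calc RG (Ω (Λ σ))
        ≤ s + (1 + s) * RG (mixture s (Ω (Λ σ)) (Ω π)) :=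
          RG_le_add_mul_RG_mixture (hΩ.isState_apply hΛσ) (hΩ.isState_apply hπ) hs
      _ = s + (1 + s) * RG (Ω (mixture s (Λ σ) π)) := by rw [map_mixture]
      _ ≤ s + (1 + s) * ε := by gcongr; exact hΩNE _ hτ.isState hτ
      _ = ε + (1 + ε) * s := by ring
  calc RG ((Ω ∘ₗ Λ) σ) ≤ ε + (1 + ε) * RG (Λ σ) := le_add_mul_RG hΛσ (by linarith) hwitness
    _ ≤ ε + (1 + ε) * d := by gcongr; exact hΛNE σ hσ hσsep
    _ = ε + d + ε * d := by ring

/-- composing a δ-non-entangling map with an ε-non-entangling map yields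
an (ε + δ + εδ)-non-entangling map. -/
theorem stmt_5 {α β γ δ' κ μ : Type*}
    [Fintype α] [DecidableEq α] [Fintype β] [DecidableEq β]
    [Fintype γ] [DecidableEq γ] [Fintype δ'] [DecidableEq δ']
    [Fintype κ] [DecidableEq κ] [Fintype μ] [DecidableEq μ]
    (ε d : ℝ) (hε : 0 ≤ ε) (hd : 0 ≤ d)
    (Λ : Matrix (α × β) (α × β) ℂ →ₗ[ℂ] Matrix (γ × δ') (γ × δ') ℂ)
    (Ω : Matrix (γ × δ') (γ × δ') ℂ →ₗ[ℂ] Matrix (κ × μ) (κ × μ) ℂ)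
    (hΛ : IsCPTP Λ) (hΩ : IsCPTP Ω)
    (hΛNE : ∀ σ, IsState σ → SepState σ → RG (Λ σ) ≤ d)
    (hΩNE : ∀ σ, IsState σ → SepState σ → RG (Ω σ) ≤ ε) :
    IsCPTP (Ω ∘ₗ Λ) ∧
    ∀ σ, IsState σ → SepState σ → RG ((Ω ∘ₗ Λ) σ) ≤ ε + d + ε * d :=
  stmt_5_general ε d hε Λ Ω hΛ hΩ hΛNE hΩNE

end
end

section
/- For every separable state σ on C^K ⊗ C^K, the fidelity with the maximally entangled state satisfies tr(Φ(K)σ) ≤ 1/K. -/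
/-! For a product state, `tr(Φ (A ⊗ B)) = tr(A Bᵀ) / K`, and `tr(A C) ≤ tr A · tr C` for positive
semidefinite `A`, `C`: in an eigenbasis of `C` the trace is `∑ λᵢ ⟨uᵢ, A uᵢ⟩`, and each diagonal
entry `⟨uᵢ, A uᵢ⟩` of a positive semidefinite matrix is at most its trace. A separable state is a
convex combination of product states and the overlap is linear in it, so the bound `1 / K`
carries over. -/

open Matrix Kronecker ComplexOrder

noncomputable section

namespace Matrix

variable {n 𝕜 : Type*} [Fintype n] [RCLike 𝕜]

lemma PosSemidef.re_diag_le_re_trace {A : Matrix n n 𝕜} (hA : A.PosSemidef) (i : n) :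
    RCLike.re (A i i) ≤ RCLike.re A.trace := by
  rw [trace, map_sum]
  exact Finset.single_le_sum (fun j _ => (RCLike.nonneg_iff.1 (hA.diag_nonneg (i := j))).1)
    (Finset.mem_univ i)

lemma re_trace_mul_diagonal_ofReal [DecidableEq n] (M : Matrix n n 𝕜) (d : n → ℝ) :
    RCLike.re (M * diagonal (fun i => (d i : 𝕜))).trace = ∑ i, RCLike.re (M i i) * d i := by
  simp [trace, mul_diagonal]

lemma PosSemidef.re_trace_mul_le [DecidableEq n] {A C : Matrix n n 𝕜} (hA : A.PosSemidef)
    (hC : C.PosSemidef) : RCLike.re (A * C).trace ≤ RCLike.re A.trace * RCLike.re C.trace := by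
  have hC' : C.IsHermitian := hC.1
  set U : Matrix n n 𝕜 := (hC'.eigenvectorUnitary : Matrix n n 𝕜)
  have hUU' : U * star U = 1 := Unitary.coe_mul_star_self _
  set M := star U * A * U
  have hM : M.PosSemidef := by
    simpa [M, star_eq_conjTranspose] using hA.conjTranspose_mul_mul_same U
  have htrM : M.trace = A.trace := by
    rw [trace_mul_cycle, hUU', one_mul]
  have htr : (A * C).trace = (M * diagonal (fun i => (hC'.eigenvalues i : 𝕜))).trace := by
    have hspec : C = U * diagonal (fun i => (hC'.eigenvalues i : 𝕜)) * star U :=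
      hC'.spectral_theorem
    conv_lhs => rw [hspec, ← Matrix.mul_assoc, ← Matrix.mul_assoc, trace_mul_comm]
    simp only [M, Matrix.mul_assoc]
  have htrC : RCLike.re C.trace = ∑ i, hC'.eigenvalues i := by
    simp [hC'.trace_eq_sum_eigenvalues]
  rw [htr, re_trace_mul_diagonal_ofReal, htrC, Finset.mul_sum, ← htrM]
  exact Finset.sum_le_sum fun i _ =>
    mul_le_mul_of_nonneg_right (hM.re_diag_le_re_trace i) (hC.eigenvalues_nonneg i)

end Matrix

lemma trace_maxEnt_mul_kronecker {α : Type*} [Fintype α] [DecidableEq α] (A B : Matrix α α ℂ) :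
    (maxEnt α * (A ⊗ₖ B)).trace = (Fintype.card α : ℂ)⁻¹ * (A * Bᵀ).trace := by
  simp [trace, mul_apply, maxEnt, Fintype.sum_prod_type, ite_and, Finset.mul_sum]
  rw [Finset.sum_comm]

lemma IsState.re_trace_maxEnt_mul_kronecker_le {α : Type*} [Fintype α] [DecidableEq α]
    {A B : Matrix α α ℂ} (hA : IsState A) (hB : IsState B) :
    (maxEnt α * (A ⊗ₖ B)).trace.re ≤ (Fintype.card α : ℝ)⁻¹ := by
  have hAB : (A * Bᵀ).trace.re ≤ 1 := by
    simpa [hA.2, hB.2] using hA.1.re_trace_mul_le hB.1.transpose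
  rw [trace_maxEnt_mul_kronecker, ← Complex.ofReal_natCast, ← Complex.ofReal_inv,
    Complex.re_ofReal_mul]
  simpa using mul_le_mul_of_nonneg_left hAB (by positivity : (0 : ℝ) ≤ (Fintype.card α : ℝ)⁻¹)

lemma SepState.re_trace_mul_le_of_forall_kronecker {α β : Type*} [Fintype α] [Fintype β]
    {σ : Matrix (α × β) (α × β) ℂ} (hσ : SepState σ) (X : Matrix (α × β) (α × β) ℂ) {c : ℝ}
    (hX : ∀ A B, IsState A → IsState B → (X * (A ⊗ₖ B)).trace.re ≤ c) :
    (X * σ).trace.re ≤ c := by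
  obtain ⟨k, p, A, B, hp, hp_sum, hA, hB, rfl⟩ := hσ
  calc (X * ∑ i, (p i : ℂ) • (A i ⊗ₖ B i)).trace.re
      = ∑ i, p i * (X * (A i ⊗ₖ B i)).trace.re := by
        simp [Finset.mul_sum, trace_sum, Complex.re_sum]
    _ ≤ ∑ i, p i * c :=
        Finset.sum_le_sum fun i _ => mul_le_mul_of_nonneg_left (hX _ _ (hA i) (hB i)) (hp i)
    _ = c := by rw [← Finset.sum_mul, hp_sum, one_mul]

theorem stmt_7_general (K : ℕ)
    (σ : Matrix (Fin K × Fin K) (Fin K × Fin K) ℂ)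
    (hsep : SepState σ) :
    ((maxEnt (Fin K) * σ).trace).re ≤ 1 / K := by
  simpa using hsep.re_trace_mul_le_of_forall_kronecker (maxEnt (Fin K))
    fun _ _ hA hB => hA.re_trace_maxEnt_mul_kronecker_le hB

/-- every separable state σ on C^K ⊗ C^K satisfies tr(Φ(K)σ) ≤ 1/K. -/
theorem stmt_7 (K : ℕ) (hK : 1 ≤ K)
    (σ : Matrix (Fin K × Fin K) (Fin K × Fin K) ℂ)
    (hσ : IsState σ) (hsep : SepState σ) :
    ((maxEnt (Fin K) * σ).trace).re ≤ 1 / K :=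
  stmt_7_general K σ hsep

end
end
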